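/- arXiv:2403.04817 — 5 statements merged into one kernel-verified Lean document; each statement's English description precedes it below -/
import Mathlib

section
/- If $\mathcal{F} \subseteq 2^{[n]}$ contains no chain of $k+1$ sets $F_1 \subsetneq F_2 \subsetneq \cdots \subsetneq F_{k+1}$ (i.e., $\mathcal{F}$ is $k$-Sperner), then $\sum_{F \in \mathcal{F}} 1/\binom{n}{|F|} \leq k$. -/
/-!
Removing the minimal elements of a family without a chain of length `k + 1` leaves a family
without a chain of length `k`, since any such chain could be extended downwards by a minimal
element. Hence the family splits into `k` antichains, and by the LYM inequality each of them
contributes at most `1` to the Lubell function.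
-/

open Finset

variable {α : Type*} [PartialOrder α]

open scoped Classical in
lemma exists_strictMono_of_forall_mem_not_minimal {s : Finset α} {k : ℕ}
    {f : Fin (k + 1) → α} (hf : StrictMono f) (hfs : ∀ i, f i ∈ {a ∈ s | ¬Minimal (· ∈ s) a}) :
    ∃ g : Fin (k + 2) → α, StrictMono g ∧ ∀ i, g i ∈ s := by
  obtain ⟨hf0s, hf0⟩ := mem_filter.1 (hfs 0)
  obtain ⟨b, hb, hbs⟩ := exists_lt_of_not_minimal hf0s hf0
  refine ⟨Fin.cons b f, Fin.strictMono_cons.2 ⟨fun j ↦ hb.trans_le (hf.monotone j.zero_le), hf⟩,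
    Fin.cases hbs fun i ↦ ?_⟩
  simpa using (mem_filter.1 (hfs i)).1

theorem sum_le_nsmul_of_not_exists_strictMono {M : Type*} [AddCommMonoid M] [PartialOrder M]
    [IsOrderedAddMonoid M] {w : α → M} {c : M} {k : ℕ} {s : Finset α}
    (hs : ¬∃ f : Fin (k + 1) → α, StrictMono f ∧ ∀ i, f i ∈ s)
    (hw : ∀ t ⊆ s, IsAntichain (· ≤ ·) (t : Set α) → ∑ a ∈ t, w a ≤ c) :
    ∑ a ∈ s, w a ≤ k • c := by
  classical
  induction k generalizing s with
  | zero =>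
    obtain rfl : s = ∅ := eq_empty_of_forall_notMem fun a ha ↦
      hs ⟨fun _ ↦ a, Subsingleton.strictMono (α := Fin 1) _, fun _ ↦ ha⟩
    simp
  | succ k ih =>
    have hmin : ∑ a ∈ s with Minimal (· ∈ s) a, w a ≤ c :=
      hw _ (filter_subset _ _)
        ((setOfPred_minimal_antichain _).subset fun a ha ↦ (mem_filter.1 ha).2)
    have hrest : ∑ a ∈ s with ¬Minimal (· ∈ s) a, w a ≤ k • c :=
      ih (fun ⟨_, hf, hfs⟩ ↦ hs (exists_strictMono_of_forall_mem_not_minimal hf hfs))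
        fun t hts ↦ hw t (hts.trans (filter_subset _ _))
    rw [← sum_filter_add_sum_filter_not s (Minimal (· ∈ s)), succ_nsmul']
    exact add_le_add hmin hrest

theorem k_sperner_lubell (n k : ℕ) (𝒜 : Finset (Finset (Fin n)))
    (h : ¬ ∃ f : Fin (k + 1) → Finset (Fin n),
      StrictMono f ∧ ∀ i, f i ∈ 𝒜) :
    ∑ A ∈ 𝒜, (1 : ℚ) / (n.choose A.card) ≤ k := by
  have hLYM : ∀ 𝒞 ⊆ 𝒜, IsAntichain (· ≤ ·) (𝒞 : Set (Finset (Fin n))) →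
      ∑ A ∈ 𝒞, (1 : ℚ) / (n.choose A.card) ≤ 1 := fun 𝒞 _ h𝒞 ↦ by
    simpa using lubell_yamamoto_meshalkin_inequality_sum_inv_choose (𝕜 := ℚ) h𝒞
  simpa using sum_le_nsmul_of_not_exists_strictMono h hLYM
end

section
/- If $\mathcal{V}$ is an antichain of subspaces of $\mathbb{F}_q^n$ (no subspace properly contained in another member), then $\sum_{V \in \mathcal{V}} 1/\qbinom{n}{\dim V}_q \leq 1$, where $\qbinom{n}{k}_q = \prod_{i=0}^{k-1} \frac{q^{n-i}-1}{q^{k-i}-1}$ is the Gaussian binomial coefficient. -/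
/-!
Count the ordered bases of `M` (`n = dim M`) whose first `k = dim V` vectors lie in, hence span,
`V`. Since `GL(M)` acts transitively on linearly independent `k`-tuples, truncating ordered bases
to their first `k` vectors has fibres of equal size. So the proportion of ordered bases adapted to
`V` equals the proportion of independent `k`-tuples of `M` lying in `V`, namely
`∏ i < k, (q^k - q^i) / (q^n - q^i) = 1 / [n choose k]_q`. The subspaces an ordered basis is adapted
to form a chain, so each ordered basis is adapted to at most one member of an antichain, and
summing these proportions gives at most `1`.
-/

/-- The Gaussian (q-)binomial coefficient `[n choose k]_q` as a rational number. -/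
def qbinom (q n k : ℕ) : ℚ :=
  ∏ i ∈ Finset.range k, ((q : ℚ) ^ (n - i) - 1) / ((q : ℚ) ^ (k - i) - 1)

open Module

theorem Nat.card_preimage_eq_card_mul {α β : Type*} [Finite α] [Finite β] (f : α → β) {c : ℕ}
    (hf : ∀ b, Nat.card (f ⁻¹' {b}) = c) (S : Set β) :
    Nat.card (f ⁻¹' S) = Nat.card S * c := by
  let g : f ⁻¹' S → S := fun x => ⟨f x, x.2⟩
  have hg : ∀ y, Nat.card {x // g x = y} = c := fun y => by
    rw [← hf y]
    exact Nat.card_congr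
      { toFun := fun x => ⟨x.1, by simp [← x.2, g]⟩
        invFun := fun x => ⟨⟨x, by simp [show f x = y from x.2]⟩, Subtype.ext x.2⟩
        left_inv := fun x => rfl
        right_inv := fun x => rfl }
  have := Fintype.ofFinite S
  rw [← Nat.card_congr (Equiv.sigmaFiberEquiv g), Nat.card_sigma]
  simp [hg]

theorem Finset.sum_ncard_le_card_of_pairwiseDisjoint {ι α : Type*} [Finite α] (t : Finset ι)
    {s : ι → Set α} (h : (t : Set ι).PairwiseDisjoint s) :
    ∑ i ∈ t, (s i).ncard ≤ Nat.card α := by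
  rw [← finsum_mem_coe_finset,
    ← Set.Finite.ncard_biUnion t.finite_toSet (fun _ _ => Set.toFinite _) h]
  exact Set.ncard_le_card _

theorem qbinom_mul_prod_pow_sub_pow {q n k : ℕ} (hq : 1 < q) (hk : k ≤ n) :
    ((∏ i : Fin k, (q ^ k - q ^ (i : ℕ)) : ℕ) : ℚ) * qbinom q n k =
      ((∏ i : Fin k, (q ^ n - q ^ (i : ℕ)) : ℕ) : ℚ) := by
  have hq' : (1 : ℚ) < q := by exact_mod_cast hq
  rw [Fin.prod_univ_eq_prod_range (fun i => q ^ k - q ^ i),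
    Fin.prod_univ_eq_prod_range (fun i => q ^ n - q ^ i), qbinom, Nat.cast_prod, Nat.cast_prod,
    ← Finset.prod_mul_distrib]
  refine Finset.prod_congr rfl fun i hi => ?_
  have hik : i < k := Finset.mem_range.1 hi
  -- both differences factor as `q ^ i * (q ^ (_ - i) - 1)`
  have hk' : (q : ℚ) ^ k = q ^ i * q ^ (k - i) := by rw [← pow_add]; congr 1; omega
  have hn' : (q : ℚ) ^ n = q ^ i * q ^ (n - i) := by rw [← pow_add]; congr 1; omega
  have hne : (q : ℚ) ^ (k - i) - 1 ≠ 0 := (sub_pos.2 (one_lt_pow₀ hq' (by omega))).ne'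
  rw [Nat.cast_sub (Nat.pow_le_pow_right hq.le hik.le),
    Nat.cast_sub (Nat.pow_le_pow_right hq.le (hik.trans_le hk).le)]
  push_cast
  rw [hk', hn']
  field_simp

section

variable {K M : Type*} [DivisionRing K] [AddCommGroup M] [Module K M]

theorem LinearIndependent.exists_linearEquiv_comp_eq {ι : Type*} [Finite ι] {s t : ι → M}
    (hs : LinearIndependent K s) (ht : LinearIndependent K t) :
    ∃ g : M ≃ₗ[K] M, ⇑g ∘ s = t := by
  have := FiniteDimensional.span_of_finite K (Set.finite_range s)
  obtain ⟨g, hg⟩ := Submodule.exists_linearEquiv_restrict_eq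
    ((Basis.span hs).equiv (Basis.span ht) (Equiv.refl ι))
  refine ⟨g, funext fun i => ?_⟩
  have := hg (Basis.span hs i)
  rw [Basis.equiv_apply, Basis.span_apply, Basis.span_apply] at this
  exact this.symm

variable (K) in
def linearIndependentTake {k n : ℕ} (hk : k ≤ n) (b : {b : Fin n → M // LinearIndependent K b}) :
    {s : Fin k → M // LinearIndependent K s} :=
  ⟨Fin.take k hk b.1, b.2.comp _ (Fin.castLE_injective hk)⟩

theorem card_linearIndependentTake_fiber_eq {k n : ℕ} (hk : k ≤ n)
    (s t : {s : Fin k → M // LinearIndependent K s}) :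
    Nat.card (linearIndependentTake K hk ⁻¹' {s}) =
      Nat.card (linearIndependentTake K hk ⁻¹' {t}) := by
  obtain ⟨g, hg⟩ := s.2.exists_linearEquiv_comp_eq t.2
  let e : {b : Fin n → M // LinearIndependent K b} ≃ {b : Fin n → M // LinearIndependent K b} :=
    (Equiv.piCongrRight fun _ => g.toEquiv).subtypeEquiv fun b =>
      (g.toLinearMap.linearIndependent_iff_of_injOn g.injective.injOn).symm
  refine Nat.card_congr (e.subtypeEquiv fun b => ?_)
  simp only [Set.mem_preimage, Set.mem_singleton_iff, ← Subtype.val_inj, linearIndependentTake, e]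
  rw [← hg]
  exact g.injective.comp_left.eq_iff.symm

namespace Submodule

variable [FiniteDimensional K M]

def adaptedBases (V : Submodule K M) :
    Set {b : Fin (finrank K M) → M // LinearIndependent K b} :=
  linearIndependentTake K V.finrank_le ⁻¹' {s | ∀ i, s.1 i ∈ V}

theorem span_take_eq_of_mem_adaptedBases {V : Submodule K M} {b} (hb : b ∈ V.adaptedBases) :
    span K (Set.range (Fin.take _ V.finrank_le b.1)) = V := by
  refine eq_of_le_of_finrank_le (span_le.2 <| Set.range_subset_iff.2 hb) ?_
  exact ((finrank_span_eq_card (linearIndependentTake K V.finrank_le b).2).trans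
    (Fintype.card_fin _)).ge

theorem le_of_mem_adaptedBases {V W : Submodule K M} {b} (hV : b ∈ V.adaptedBases)
    (hW : b ∈ W.adaptedBases) (h : finrank K V ≤ finrank K W) : V ≤ W := by
  rw [← span_take_eq_of_mem_adaptedBases hV, ← span_take_eq_of_mem_adaptedBases hW,
    ← Fin.take_take h W.finrank_le]
  exact span_mono (Set.range_comp_subset_range _ _)

theorem pairwiseDisjoint_adaptedBases {𝒱 : Set (Submodule K M)}
    (h : IsAntichain (· ≤ ·) 𝒱) : 𝒱.PairwiseDisjoint adaptedBases := by
  intro V hV W hW hne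
  refine Set.disjoint_left.2 fun b hbV hbW => ?_
  rcases le_total (finrank K V) (finrank K W) with hle | hle
  · exact h hV hW hne (le_of_mem_adaptedBases hbV hbW hle)
  · exact h hW hV hne.symm (le_of_mem_adaptedBases hbW hbV hle)

variable [Fintype K]

theorem card_adaptedBases_mul_qbinom (V : Submodule K M) :
    (V.adaptedBases.ncard : ℚ) * qbinom (Fintype.card K) (finrank K M) (finrank K V) =
      Nat.card {b : Fin (finrank K M) → M // LinearIndependent K b} := by
  have : Finite M := Module.finite_of_finite K
  let s₀ := linearIndependentTake K V.finrank_le ⟨_, (finBasis K M).linearIndependent⟩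
  have hfiber := fun s => card_linearIndependentTake_fiber_eq V.finrank_le s s₀
  let eV : {s : {s : Fin (finrank K V) → M // LinearIndependent K s} | ∀ i, s.1 i ∈ V} ≃
      {s : Fin (finrank K V) → V // LinearIndependent K s} :=
    { toFun s := ⟨fun i => ⟨s.1.1 i, s.2 i⟩, .of_comp V.subtype s.1.2⟩
      invFun s := ⟨⟨fun i => s.1 i, s.2.map' V.subtype V.ker_subtype⟩, fun i => (s.1 i).2⟩
      left_inv _ := rfl
      right_inv _ := rfl }
  have hV := Nat.card_preimage_eq_card_mul _ hfiber {s | ∀ i, s.1 i ∈ V}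
  have hM := Nat.card_preimage_eq_card_mul _ hfiber Set.univ
  rw [Nat.card_congr eV, card_linearIndependent le_rfl] at hV
  rw [Set.preimage_univ, Nat.card_univ, Nat.card_univ,
    card_linearIndependent V.finrank_le] at hM
  rw [show V.adaptedBases.ncard = _ from hV, hM, Nat.cast_mul, Nat.cast_mul,
    ← qbinom_mul_prod_pow_sub_pow Fintype.one_lt_card V.finrank_le]
  ring

theorem sum_inv_qbinom_le_one {𝒱 : Finset (Submodule K M)}
    (h : IsAntichain (· ≤ ·) (𝒱 : Set (Submodule K M))) :
    ∑ V ∈ 𝒱, 1 / qbinom (Fintype.card K) (finrank K M) (finrank K V) ≤ 1 := by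
  have : Finite M := Module.finite_of_finite K
  set N := Nat.card {b : Fin (finrank K M) → M // LinearIndependent K b}
  have hN : (0 : ℚ) < N := by
    have : Nonempty {b : Fin (finrank K M) → M // LinearIndependent K b} :=
      ⟨⟨_, (finBasis K M).linearIndependent⟩⟩
    exact_mod_cast Nat.card_pos
  have hterm (V : Submodule K M) :
      1 / qbinom (Fintype.card K) (finrank K M) (finrank K V) = V.adaptedBases.ncard / N := by
    have hmul := card_adaptedBases_mul_qbinom V
    have hqbinom : qbinom (Fintype.card K) (finrank K M) (finrank K V) ≠ 0 := by
      intro h0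
      rw [h0, mul_zero] at hmul
      exact hN.ne hmul
    rw [eq_div_iff hN.ne', ← hmul]
    field_simp
  rw [Finset.sum_congr rfl fun V _ => hterm V, ← Finset.sum_div, div_le_one hN]
  exact_mod_cast Finset.sum_ncard_le_card_of_pairwiseDisjoint 𝒱 (pairwiseDisjoint_adaptedBases h)

end Submodule

end

/-- The q-analogue LYM inequality for antichains of subspaces of `𝔽_q^n`. -/
theorem q_lym (q n : ℕ) (F : Type*) [Field F] [Fintype F]
    (hq : Fintype.card F = q) (𝒱 : Finset (Submodule F (Fin n → F)))
    (h : IsAntichain (· ≤ ·) (𝒱 : Set (Submodule F (Fin n → F)))) :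
    ∑ V ∈ 𝒱, 1 / qbinom q n (Module.finrank F V) ≤ 1 := by
  subst hq
  simpa only [Module.finrank_fin_fun] using Submodule.sum_inv_qbinom_le_one h
end

section
/- If $\mathcal{V}$ is an antichain of subspaces of $\mathbb{F}_q^n$, then $|\mathcal{V}| \leq \qbinom{n}{\lfloor n/2 \rfloor}_q$. -/
open Finset Submodule Module

/-- `fq q n d = (number of LI d-tuples in F_q^d) * (number of extensions to a basis of F_q^n)`.
This equals `#GL_n(q) / [n choose d]_q`. -/
def fq (q n d : ℕ) : ℕ :=
  (∏ i ∈ Finset.range d, (q ^ d - q ^ i)) * ∏ i ∈ Finset.Ico d n, (q ^ n - q ^ i)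

lemma fq_pos {q n d : ℕ} (hq : 2 ≤ q) (hd : d ≤ n) : 0 < fq q n d := by
  apply Nat.mul_pos <;> apply Finset.prod_pos <;> intro i hi
  · simp only [mem_range] at hi
    have := Nat.pow_lt_pow_right (by omega : 1 < q) hi
    omega
  · simp only [mem_Ico] at hi
    have := Nat.pow_lt_pow_right (by omega : 1 < q) (lt_of_lt_of_le hi.2 le_rfl)
    omega

lemma fq_step {q n d : ℕ} (hq : 2 ≤ q) (hd : d < n) :
    fq q n d * (q ^ (d + 1) - 1) = fq q n (d + 1) * (q ^ (n - d) - 1) := by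
  unfold fq
  rw [Finset.prod_eq_prod_Ico_succ_bot hd, Finset.prod_range_succ']
  have h1 : q ^ n - q ^ d = q ^ d * (q ^ (n - d) - 1) := by
    rw [Nat.mul_sub, mul_one, ← pow_add, Nat.add_sub_cancel' hd.le]
  have h2 : ∀ i, q ^ (d + 1) - q ^ (i + 1) = q * (q ^ d - q ^ i) := by
    intro i
    rw [Nat.mul_sub, pow_succ, pow_succ, mul_comm (q ^ d), mul_comm (q ^ i)]
  simp only [h2, pow_zero]
  rw [Finset.prod_mul_distrib, Finset.prod_const, Finset.card_range, h1]
  ring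

lemma fq_anti {q n a b : ℕ} (hq : 2 ≤ q) (hab : a ≤ b) (hb : b ≤ n / 2) :
    fq q n b ≤ fq q n a := by
  induction b, hab using Nat.le_induction with
  | base => exact le_rfl
  | succ b hab ih =>
    have hb' : b ≤ n / 2 := by omega
    refine le_trans ?_ (ih hb')
    have hbn : b < n := by omega
    have key := fq_step hq hbn
    have hle : q ^ (b + 1) - 1 ≤ q ^ (n - b) - 1 := by
      have : q ^ (b + 1) ≤ q ^ (n - b) := Nat.pow_le_pow_right (by omega) (by omega)
      omega
    have hpos : 0 < q ^ (n - b) - 1 := by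
      have : 2 ≤ q ^ (n - b) := by
        calc 2 ≤ q := hq
        _ = q ^ 1 := (pow_one q).symm
        _ ≤ q ^ (n - b) := Nat.pow_le_pow_right (by omega) (by omega)
      omega
    have : fq q n (b + 1) * (q ^ (n - b) - 1) ≤ fq q n b * (q ^ (n - b) - 1) := by
      rw [← key]
      exact Nat.mul_le_mul_left _ hle
    exact Nat.le_of_mul_le_mul_right this hpos

lemma fq_mono {q n a b : ℕ} (hq : 2 ≤ q) (hab : a ≤ b) (ha : n / 2 ≤ a) (hb : b ≤ n) :
    fq q n a ≤ fq q n b := by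
  induction b, hab using Nat.le_induction with
  | base => exact le_rfl
  | succ b hab ih =>
    refine le_trans (ih (by omega)) ?_
    have hbn : b < n := by omega
    have key := fq_step hq hbn
    have hle : q ^ (n - b) - 1 ≤ q ^ (b + 1) - 1 := by
      have : q ^ (n - b) ≤ q ^ (b + 1) := Nat.pow_le_pow_right (by omega) (by omega)
      omega
    have hpos : 0 < q ^ (b + 1) - 1 := by
      have : 2 ≤ q ^ (b + 1) := by
        calc 2 ≤ q := hq
        _ = q ^ 1 := (pow_one q).symm
        _ ≤ q ^ (b + 1) := Nat.pow_le_pow_right (by omega) (by omega)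
      omega
    have : fq q n b * (q ^ (b + 1) - 1) ≤ fq q n (b + 1) * (q ^ (b + 1) - 1) := by
      rw [key]
      exact Nat.mul_le_mul_left _ hle
    exact Nat.le_of_mul_le_mul_right this hpos

lemma fq_min {q n d : ℕ} (hq : 2 ≤ q) (hd : d ≤ n) : fq q n (n / 2) ≤ fq q n d := by
  rcases le_or_gt d (n / 2) with h | h
  · exact fq_anti hq h le_rfl
  · exact fq_mono hq h.le le_rfl hd

lemma cast_prod_sub {q a : ℕ} (hq : 1 ≤ q) (s : Finset ℕ) (h : ∀ i ∈ s, i ≤ a) :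
    ((∏ i ∈ s, (q ^ a - q ^ i) : ℕ) : ℚ) = ∏ i ∈ s, ((q : ℚ) ^ a - (q : ℚ) ^ i) := by
  rw [Nat.cast_prod]
  refine Finset.prod_congr rfl fun i hi => ?_
  rw [Nat.cast_sub (Nat.pow_le_pow_right hq (h i hi))]
  push_cast
  ring

lemma qbinom_mul_fq {q m n : ℕ} (hq : 2 ≤ q) (hm : m ≤ n) :
    qbinom q n m * (fq q n m : ℚ) = ∏ i ∈ Finset.range n, ((q : ℚ) ^ n - (q : ℚ) ^ i) := by
  have hq1 : (1:ℕ) ≤ q := by omega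
  unfold fq
  rw [Nat.cast_mul, cast_prod_sub hq1 _ (fun i hi => by simp only [mem_range] at hi; omega),
    cast_prod_sub hq1 _ (fun i hi => by simp only [mem_Ico] at hi; omega),
    ← mul_assoc, qbinom, ← Finset.prod_mul_distrib]
  have key : ∀ i ∈ Finset.range m,
      ((q : ℚ) ^ (n - i) - 1) / ((q : ℚ) ^ (m - i) - 1) * ((q : ℚ) ^ m - (q : ℚ) ^ i)
        = (q : ℚ) ^ n - (q : ℚ) ^ i := by
    intro i hi
    simp only [mem_range] at hi
    have h1 : (q : ℚ) ^ m - (q : ℚ) ^ i = (q : ℚ) ^ i * ((q : ℚ) ^ (m - i) - 1) := by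
      rw [mul_sub, mul_one, ← pow_add, Nat.add_sub_cancel' hi.le]
    have h2 : (q : ℚ) ^ n - (q : ℚ) ^ i = (q : ℚ) ^ i * ((q : ℚ) ^ (n - i) - 1) := by
      rw [mul_sub, mul_one, ← pow_add, Nat.add_sub_cancel' (by omega : i ≤ n)]
    have h3 : (q : ℚ) ^ (m - i) - 1 ≠ 0 := by
      have : (2:ℚ) ≤ (q : ℚ) ^ (m - i) := by
        calc (2:ℚ) ≤ (q:ℚ) := by exact_mod_cast hq
        _ = (q:ℚ) ^ 1 := (pow_one _).symm
        _ ≤ (q:ℚ) ^ (m - i) := by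
            apply pow_le_pow_right₀ (by exact_mod_cast hq1) (by omega)
      linarith
    rw [h1, h2]
    field_simp
  rw [Finset.prod_congr rfl key, Finset.range_eq_Ico,
    Finset.prod_Ico_consecutive _ (Nat.zero_le m) hm, ← Finset.range_eq_Ico]

section Counting

variable {F : Type*} [Field F] [Fintype F] {n : ℕ}

lemma prefix_card (V : Submodule F (Fin n → F)) :
    ∀ (l : ℕ) (hdl : finrank F V ≤ l), l ≤ n →
    Nat.card {s : Fin l → (Fin n → F) // LinearIndependent F s ∧
        Submodule.span F (Set.range (s ∘ Fin.castLE hdl)) = V} =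
      (∏ i ∈ Finset.range (finrank F V),
          (Fintype.card F ^ finrank F V - Fintype.card F ^ i)) *
        ∏ i ∈ Finset.Ico (finrank F V) l, (Fintype.card F ^ n - Fintype.card F ^ i) := by
  classical
  set d := finrank F V with hd
  intro l hdl
  induction l, hdl using Nat.le_induction with
  | base =>
    intro _
    rw [Finset.Ico_self, Finset.prod_empty, mul_one]
    have hcast : ∀ s : Fin d → (Fin n → F), s ∘ Fin.castLE le_rfl = s := by
      intro s
      funext i
      exact congrArg s (Fin.ext rfl)
    have e : {s : Fin d → (Fin n → F) // LinearIndependent F s ∧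
          Submodule.span F (Set.range (s ∘ Fin.castLE le_rfl)) = V}
        ≃ {t : Fin d → V // LinearIndependent F t} :=
      { toFun := fun ⟨s, hLI, hsp⟩ => ⟨fun i => ⟨s i, by
            rw [← hsp]; exact Submodule.subset_span ⟨i, rfl⟩⟩,
          LinearIndependent.of_comp V.subtype hLI⟩
        invFun := fun t => ⟨fun i => (t.1 i : Fin n → F), by
          refine ⟨t.2.map' V.subtype (Submodule.ker_subtype V), ?_⟩
          rw [hcast]
          have h1 : Submodule.span F (Set.range t.1) = ⊤ :=
            t.2.span_eq_top_of_card_eq_finrank' (by simp [hd])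
          have h2 : Set.range (fun i => (t.1 i : Fin n → F)) = V.subtype '' Set.range t.1 := by
            rw [← Set.range_comp]; rfl
          rw [h2, ← Submodule.map_span, h1, Submodule.map_top, Submodule.range_subtype]⟩
        left_inv := fun ⟨s, hLI, hsp⟩ => Subtype.ext rfl
        right_inv := fun t => Subtype.ext rfl }
    rw [Nat.card_congr e, card_linearIndependent (K := F) (V := V) le_rfl]
    exact Fin.prod_univ_eq_prod_range (fun i => Fintype.card F ^ d - Fintype.card F ^ i) d
  | succ l hdl ih =>
    intro hln
    have hl : l ≤ n := by omega
    rw [Finset.prod_Ico_succ_top hdl, ← mul_assoc, ← ih hl]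
    rw [Nat.card_eq_fintype_card, Nat.card_eq_fintype_card, Fintype.card_subtype,
      Fintype.card_subtype]
    have hinit : ∀ s : Fin (l + 1) → (Fin n → F),
        (Fin.init s) ∘ Fin.castLE hdl = s ∘ Fin.castLE (by omega : d ≤ l + 1) := by
      intro s
      funext i
      show s ((Fin.castLE hdl i).castSucc) = s (Fin.castLE _ i)
      exact congrArg s (Fin.ext rfl)
    have hstep : ∀ s : Fin (l + 1) → (Fin n → F), s ∈ Finset.univ.filter
        (fun s => LinearIndependent F s ∧
          Submodule.span F (Set.range (s ∘ Fin.castLE (by omega : d ≤ l + 1))) = V) →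
        Fin.init s ∈ Finset.univ.filter (fun t : Fin l → (Fin n → F) =>
          LinearIndependent F t ∧ Submodule.span F (Set.range (t ∘ Fin.castLE hdl)) = V) := by
      intro s hs
      simp only [Finset.mem_filter, Finset.mem_univ, true_and] at hs ⊢
      refine ⟨hs.1.comp Fin.castSucc (Fin.castSucc_injective l), ?_⟩
      rw [hinit s]
      exact hs.2
    rw [Finset.card_eq_sum_card_fiberwise hstep]
    rw [Finset.sum_congr rfl (fun t ht => ?_), Finset.sum_const, smul_eq_mul]
    simp only [Finset.mem_filter, Finset.mem_univ, true_and] at ht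
    have hcard : (Finset.univ.filter
        (fun x : Fin n → F => x ∉ Submodule.span F (Set.range t))).card
        = Fintype.card F ^ n - Fintype.card F ^ l := by
      rw [← Fintype.card_subtype, Fintype.card_subtype_compl]
      congr 1
      · rw [Fintype.card_fun, Fintype.card_fin]
      · rw [card_eq_pow_finrank (K := F)]
        congr 1
        rw [show finrank F {x : Fin n → F // x ∈ Submodule.span F (Set.range t)}
            = finrank F (Submodule.span F (Set.range t)) from rfl,
          finrank_span_eq_card ht.1, Fintype.card_fin]
    rw [← hcard]
    refine Finset.card_bij' (fun s _ => s (Fin.last l)) (fun x _ => Fin.snoc t x)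
      ?hi ?hj ?li ?ri
    case hi =>
      intro s hs
      simp only [Finset.mem_filter, Finset.mem_univ, true_and] at hs ⊢
      obtain ⟨⟨hLI, _⟩, hinit_eq⟩ := hs
      have hsnoc : s = Fin.snoc t (s (Fin.last l)) := by
        rw [← hinit_eq]; exact (Fin.snoc_init_self s).symm
      rw [hsnoc] at hLI
      exact (linearIndependent_fin_snoc.mp hLI).2
    case hj =>
      intro x hx
      simp only [Finset.mem_filter, Finset.mem_univ, true_and] at hx ⊢
      refine ⟨⟨linearIndependent_fin_snoc.mpr ⟨ht.1, hx⟩, ?_⟩, by simp⟩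
      have hpre : (Fin.snoc t x : Fin (l+1) → (Fin n → F)) ∘ Fin.castLE (by omega : d ≤ l + 1)
          = t ∘ Fin.castLE hdl := by
        funext i
        show (Fin.snoc t x : Fin (l+1) → (Fin n → F)) _ = t (Fin.castLE hdl i)
        have hcs : Fin.castLE (by omega : d ≤ l + 1) i = (Fin.castLE hdl i).castSucc :=
          Fin.ext rfl
        rw [hcs, Fin.snoc_castSucc]
      rw [hpre]
      exact ht.2
    case li =>
      intro s hs
      simp only [Finset.mem_filter] at hs
      show Fin.snoc t (s (Fin.last l)) = s
      rw [← hs.2]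
      exact Fin.snoc_init_self s
    case ri =>
      intro x hx
      exact Fin.snoc_last (α := fun _ => Fin n → F) x t

end Counting

/-- The q-analogue of Sperner's theorem. -/
theorem q_sperner (q n : ℕ) (F : Type*) [Field F] [Fintype F]
    (hq : Fintype.card F = q) (𝒱 : Finset (Submodule F (Fin n → F)))
    (h : IsAntichain (· ≤ ·) (𝒱 : Set (Submodule F (Fin n → F)))) :
    (𝒱.card : ℚ) ≤ qbinom q n (n / 2) := by
  classical
  subst hq
  set q := Fintype.card F with hqdef
  have hq2 : 2 ≤ q := Fintype.one_lt_card
  have hfr : finrank F (Fin n → F) = n := by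
    rw [Module.finrank_pi, Fintype.card_fin]
  have hVn : ∀ V : Submodule F (Fin n → F), finrank F V ≤ n := fun V =>
    le_trans V.finrank_le (le_of_eq hfr)
  set m := n / 2 with hm
  have hmn : m ≤ n := Nat.div_le_self n 2
  -- the fiber finsets
  set T : Submodule F (Fin n → F) → Finset (Fin n → (Fin n → F)) := fun V =>
    Finset.univ.filter (fun s => LinearIndependent F s ∧
      Submodule.span F (Set.range (s ∘ Fin.castLE (hVn V))) = V) with hT
  have hTcard : ∀ V : Submodule F (Fin n → F), (T V).card = fq q n (finrank F V) := by
    intro V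
    have := prefix_card V n (hVn V) le_rfl
    rw [Nat.card_eq_fintype_card, Fintype.card_subtype] at this
    rw [hT, this, fq]
  -- T's are pairwise disjoint on 𝒱 and contained in the set of LI tuples
  have hsub : ∀ V : Submodule F (Fin n → F),
      T V ⊆ Finset.univ.filter (fun s : Fin n → (Fin n → F) => LinearIndependent F s) := by
    intro V s hs
    simp only [hT, Finset.mem_filter, Finset.mem_univ, true_and] at hs ⊢
    exact hs.1
  have hle : ∀ V W : Submodule F (Fin n → F), finrank F V ≤ finrank F W →
      ∀ s : Fin n → (Fin n → F), s ∈ T V → s ∈ T W → V ≤ W := by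
    intro V W hVW s hsV hsW
    simp only [hT, Finset.mem_filter, Finset.mem_univ, true_and] at hsV hsW
    rw [← hsV.2, ← hsW.2]
    apply Submodule.span_mono
    rintro x ⟨i, rfl⟩
    exact ⟨Fin.castLE hVW i, congrArg s (Fin.ext rfl)⟩
  have hdisj : (𝒱 : Set (Submodule F (Fin n → F))).PairwiseDisjoint T := by
    intro V hV W hW hne
    rw [Function.onFun, Finset.disjoint_left]
    intro s hsV hsW
    rcases le_total (finrank F V) (finrank F W) with hVW | hWV
    · exact h hV hW hne (hle V W hVW s hsV hsW)
    · exact h hW hV (Ne.symm hne) (hle W V hWV s hsW hsV)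
  -- total count of LI n-tuples
  have hB : (Finset.univ.filter
      (fun s : Fin n → (Fin n → F) => LinearIndependent F s)).card
      = ∏ i ∈ Finset.range n, (q ^ n - q ^ i) := by
    have := card_linearIndependent (K := F) (V := Fin n → F) (k := n) (by rw [hfr])
    rw [Nat.card_eq_fintype_card, Fintype.card_subtype, hfr] at this
    rw [this]
    exact Fin.prod_univ_eq_prod_range (fun i => q ^ n - q ^ i) n
  -- main counting inequality over ℕ
  have key : 𝒱.card * fq q n m ≤ ∏ i ∈ Finset.range n, (q ^ n - q ^ i) := by
    calc 𝒱.card * fq q n m = ∑ _V ∈ 𝒱, fq q n m := by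
          rw [Finset.sum_const, smul_eq_mul]
      _ ≤ ∑ V ∈ 𝒱, fq q n (finrank F V) :=
          Finset.sum_le_sum fun V _ => fq_min hq2 (hVn V)
      _ = ∑ V ∈ 𝒱, (T V).card := by
          exact Finset.sum_congr rfl fun V _ => (hTcard V).symm
      _ = (𝒱.biUnion T).card := (Finset.card_biUnion (fun V hV W hW hne =>
            hdisj hV hW hne)).symm
      _ ≤ (Finset.univ.filter
            (fun s : Fin n → (Fin n → F) => LinearIndependent F s)).card := by
          apply Finset.card_le_card
          intro s hs
          rw [Finset.mem_biUnion] at hs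
          obtain ⟨V, _, hsV⟩ := hs
          exact hsub V hsV
      _ = ∏ i ∈ Finset.range n, (q ^ n - q ^ i) := hB
  -- conclude over ℚ
  have hpos : 0 < fq q n m := fq_pos hq2 hmn
  have hposQ : (0:ℚ) < (fq q n m : ℚ) := by exact_mod_cast hpos
  have hQ : (𝒱.card : ℚ) * (fq q n m : ℚ) ≤ qbinom q n m * (fq q n m : ℚ) := by
    rw [qbinom_mul_fq hq2 hmn, ← cast_prod_sub (by omega) _
      (fun i hi => by simp only [Finset.mem_range] at hi; omega)]
    exact_mod_cast key
  exact le_of_mul_le_mul_right hQ hposQ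
end

section
/- For any family $\mathcal{F} \subseteq 2^{[n]}$ of sets, $\sum_{F \in \mathcal{F}} \frac{1}{c(F)\,\binom{n}{|F|}} \leq 1$, where $c(F)$ is the maximum length of a chain of sets in $\mathcal{F}$ that contains $F$. -/
/-- `chainHeight 𝒜 A` is the maximum length of a chain of sets from `𝒜` containing `A`. -/
noncomputable def chainHeight {n : ℕ} (𝒜 : Finset (Finset (Fin n))) (A : Finset (Fin n)) : ℕ :=
  sSup {k : ℕ | ∃ 𝒞 ⊆ 𝒜, A ∈ 𝒞 ∧ IsChain (· ⊆ ·) (𝒞 : Set (Finset (Fin n))) ∧ 𝒞.card = k}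

open Finset


/-- `pref σ k` is the set of the first `k` values of σ. -/
def pref {n : ℕ} (σ : Equiv.Perm (Fin n)) (k : ℕ) : Finset (Fin n) :=
  Finset.univ.filter (fun x => (σ.symm x : ℕ) < k)

lemma pref_mono {n : ℕ} (σ : Equiv.Perm (Fin n)) {j k : ℕ} (h : j ≤ k) :
    pref σ j ⊆ pref σ k := by
  intro x hx
  simp only [pref, mem_filter, mem_univ, true_and] at *
  omega

lemma chainHeight_bdd {n : ℕ} (𝒜 : Finset (Finset (Fin n))) (A : Finset (Fin n)) :
    BddAbove {k : ℕ | ∃ 𝒞 ⊆ 𝒜, A ∈ 𝒞 ∧ IsChain (· ⊆ ·) (𝒞 : Set (Finset (Fin n))) ∧ 𝒞.card = k} :=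
  ⟨𝒜.card, fun k ⟨𝒞, h𝒞, _, _, hc⟩ => hc ▸ card_le_card h𝒞⟩

lemma le_chainHeight {n : ℕ} {𝒜 𝒞 : Finset (Finset (Fin n))} {A : Finset (Fin n)}
    (h𝒞 : 𝒞 ⊆ 𝒜) (hA : A ∈ 𝒞) (hch : IsChain (· ⊆ ·) (𝒞 : Set (Finset (Fin n)))) :
    𝒞.card ≤ chainHeight 𝒜 A :=
  le_csSup (chainHeight_bdd 𝒜 A) ⟨𝒞, h𝒞, hA, hch, rfl⟩

lemma one_le_chainHeight {n : ℕ} {𝒜 : Finset (Finset (Fin n))} {A : Finset (Fin n)}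
    (hA : A ∈ 𝒜) : 1 ≤ chainHeight 𝒜 A := by
  have := le_chainHeight (𝒞 := {A}) (by simpa using hA) (mem_singleton_self A) (by simp)
  simpa using this

lemma card_pref_fiber {n : ℕ} (A : Finset (Fin n)) :
    (univ.filter (fun σ : Equiv.Perm (Fin n) => pref σ A.card = A)).card
      = A.card.factorial * (n - A.card).factorial := by
  classical
  set a := A.card with ha
  have hcond : ∀ σ : Equiv.Perm (Fin n),
      pref σ a = A ↔ ∀ i : Fin n, ((i : ℕ) < a ↔ σ i ∈ A) := by
    intro σ
    rw [Finset.ext_iff]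
    constructor
    · intro h i
      have := h (σ i)
      simpa [pref] using this
    · intro h x
      have := h (σ.symm x)
      simpa [pref] using this
  have hsub : (univ.filter (fun σ : Equiv.Perm (Fin n) => pref σ a = A)).card
      = Fintype.card {σ : Equiv.Perm (Fin n) // ∀ i : Fin n, ((i : ℕ) < a ↔ σ i ∈ A)} := by
    rw [Fintype.card_subtype]
    congr 1
    apply filter_congr
    intro σ _
    simpa using hcond σ
  rw [hsub]
  -- build the equivalence
  let p : Fin n → Prop := fun i => (i : ℕ) < a
  let q : Fin n → Prop := fun x => x ∈ A
  let Φ : {σ : Equiv.Perm (Fin n) // ∀ i : Fin n, ((i : ℕ) < a ↔ σ i ∈ A)} ≃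
      ({i : Fin n // p i} ≃ {x : Fin n // q x}) × ({i : Fin n // ¬ p i} ≃ {x : Fin n // ¬ q x}) :=
    { toFun := fun σh => ⟨(σh.1 : Fin n ≃ Fin n).subtypeEquiv (fun i => σh.2 i),
        (σh.1 : Fin n ≃ Fin n).subtypeEquiv (fun i => not_congr (σh.2 i))⟩
      invFun := fun ef => ⟨Equiv.subtypeCongr ef.1 ef.2, by
        intro i
        by_cases hi : p i
        · simp only [Equiv.subtypeCongr, Equiv.trans_apply,
            Equiv.sumCompl_symm_apply_of_pos hi, Equiv.sumCongr_apply, Sum.map_inl,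
            Equiv.sumCompl_apply_inl]
          exact ⟨fun _ => (ef.1 ⟨i, hi⟩).2, fun _ => hi⟩
        · simp only [Equiv.subtypeCongr, Equiv.trans_apply,
            Equiv.sumCompl_symm_apply_of_neg hi, Equiv.sumCongr_apply, Sum.map_inr,
            Equiv.sumCompl_apply_inr]
          exact ⟨fun h => absurd h hi, fun h => absurd h (ef.2 ⟨i, hi⟩).2⟩⟩
      left_inv := fun σh => by
        ext i
        by_cases hi : p i
        · simp [Equiv.subtypeCongr, Equiv.sumCompl_symm_apply_of_pos hi]
        · simp [Equiv.subtypeCongr, Equiv.sumCompl_symm_apply_of_neg hi]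
      right_inv := fun ef => by
        refine Prod.ext ?_ ?_
        · ext x
          · obtain ⟨i, hi⟩ := x
            simp [Equiv.subtypeEquiv, Equiv.subtypeCongr,
              Equiv.sumCompl_symm_apply_of_pos hi]
        · ext x
          · obtain ⟨i, hi⟩ := x
            simp [Equiv.subtypeEquiv, Equiv.subtypeCongr,
              Equiv.sumCompl_symm_apply_of_neg hi] }
  have han : a ≤ n := ha ▸ (card_le_univ A).trans_eq (by simp)
  have hfilt : (univ.filter (fun x : Fin n => (x : ℕ) < a)) =
      (Finset.range a).attachFin (fun m hm => lt_of_lt_of_le (mem_range.1 hm) han) := by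
    ext x
    simp [mem_attachFin]
  have hcp : Fintype.card {i : Fin n // p i} = a := by
    rw [Fintype.card_subtype]
    simp only [p]
    rw [hfilt, card_attachFin, card_range]
  have hcq : Fintype.card {x : Fin n // q x} = a := by
    simpa [q] using (Fintype.card_coe A).trans ha.symm
  have hcpn : Fintype.card {i : Fin n // ¬ p i} = n - a := by
    rw [Fintype.card_subtype_compl, hcp]; simp
  have hcqn : Fintype.card {x : Fin n // ¬ q x} = n - a := by
    rw [Fintype.card_subtype_compl, hcq]; simp
  rw [Fintype.card_congr Φ, Fintype.card_prod,
    Fintype.card_equiv (Fintype.equivOfCardEq (hcp.trans hcq.symm)),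
    Fintype.card_equiv (Fintype.equivOfCardEq (hcpn.trans hcqn.symm)), hcp, hcpn]

lemma chain_sum_le_one {n : ℕ} (𝒜 : Finset (Finset (Fin n))) (σ : Equiv.Perm (Fin n)) :
    ∑ A ∈ 𝒜.filter (fun A => pref σ A.card = A), (1 : ℚ) / (chainHeight 𝒜 A) ≤ 1 := by
  classical
  set 𝒞 := 𝒜.filter (fun A => pref σ A.card = A) with h𝒞
  have hsub : 𝒞 ⊆ 𝒜 := filter_subset _ _
  have hchain : IsChain (· ⊆ ·) (𝒞 : Set (Finset (Fin n))) := by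
    intro A hA B hB _
    simp only [h𝒞, mem_coe, mem_filter] at hA hB
    rcases le_total A.card B.card with h | h
    · exact Or.inl (hA.2 ▸ hB.2 ▸ pref_mono σ h)
    · exact Or.inr (hB.2 ▸ hA.2 ▸ pref_mono σ h)
  rcases eq_or_ne 𝒞 ∅ with h0 | h0
  · simp [h0]
  have hpos : 0 < 𝒞.card := card_pos.2 (nonempty_iff_ne_empty.2 h0)
  calc ∑ A ∈ 𝒞, (1 : ℚ) / (chainHeight 𝒜 A)
      ≤ ∑ A ∈ 𝒞, (1 : ℚ) / (𝒞.card) := by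
        refine sum_le_sum fun A hA => ?_
        have hle : (𝒞.card : ℚ) ≤ (chainHeight 𝒜 A : ℚ) := by
          exact_mod_cast le_chainHeight hsub hA hchain
        exact one_div_le_one_div_of_le (by exact_mod_cast hpos) hle
    _ = 1 := by
        rw [sum_const, nsmul_eq_mul]
        field_simp

/-- The Malec–Tompkins strengthening of the LYM inequality. -/
theorem malec_tompkins (n : ℕ) (𝒜 : Finset (Finset (Fin n))) :
    ∑ A ∈ 𝒜, (1 : ℚ) / (chainHeight 𝒜 A * n.choose A.card) ≤ 1 := by
  classical
  have hfact : (0 : ℚ) < n.factorial := by exact_mod_cast n.factorial_pos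
  rw [← mul_le_mul_iff_right₀ hfact]
  calc (n.factorial : ℚ) * ∑ A ∈ 𝒜, (1 : ℚ) / (chainHeight 𝒜 A * n.choose A.card)
      = ∑ A ∈ 𝒜, ∑ σ ∈ univ.filter (fun σ : Equiv.Perm (Fin n) => pref σ A.card = A),
          (1 : ℚ) / (chainHeight 𝒜 A) := by
        rw [mul_sum]
        refine sum_congr rfl fun A hA => ?_
        rw [sum_const, card_pref_fiber, nsmul_eq_mul]
        have hcn : A.card ≤ n := (card_le_univ A).trans_eq (by simp)
        have hC : (0 : ℚ) < (n.choose A.card : ℚ) := by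
          exact_mod_cast Nat.choose_pos hcn
        have hc : (0 : ℚ) < (chainHeight 𝒜 A : ℚ) := by
          exact_mod_cast one_le_chainHeight hA
        rw [← Nat.choose_mul_factorial_mul_factorial hcn]
        push_cast
        field_simp
    _ = ∑ σ : Equiv.Perm (Fin n), ∑ A ∈ 𝒜.filter (fun A => pref σ A.card = A),
          (1 : ℚ) / (chainHeight 𝒜 A) := by
        simp_rw [sum_filter]
        exact Finset.sum_comm
    _ ≤ ∑ _σ : Equiv.Perm (Fin n), (1 : ℚ) :=
        sum_le_sum fun σ _ => chain_sum_le_one 𝒜 σ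
    _ = (n.factorial : ℚ) * 1 := by
        rw [sum_const, nsmul_eq_mul]
        simp [Fintype.card_perm]
end

section
/- Let $q \geq 2$ and $0 \leq l < n$ with $n \geq 3l$. If $\mathcal{V}$ is a complex of subspaces of $\mathbb{F}_q^n$ (downward closed under inclusion) with $\|\mathcal{V}\|_q := \sum_{V \in \mathcal{V}} 1/\qbinom{n}{\dim V}_q < n+1$, then $|\mathcal{V}| \geq \sum_{0 \leq i < l} \qbinom{n}{i}_q + (\|\mathcal{V}\|_q - l)\,\qbinom{n}{l}_q$. -/
namespace QP
open Finset Module Submodule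

open Finset

/-- q-factorial -/
def qfact (q m : ℕ) : ℚ := ∏ i ∈ Finset.range m, ((q:ℚ)^(i+1) - 1)

lemma one_lt_qpow {q : ℕ} (hq2 : 2 ≤ q) {m : ℕ} (hm : 1 ≤ m) : (1:ℚ) < (q:ℚ)^m := by
  have h1 : (1:ℚ) < (q:ℚ) := by exact_mod_cast hq2.trans_lt' one_lt_two
  exact one_lt_pow₀ h1 (by omega)

lemma qpow_pos {q : ℕ} (hq2 : 2 ≤ q) (m : ℕ) : (0:ℚ) < (q:ℚ)^m := by positivity

lemma qfact_pos {q : ℕ} (hq2 : 2 ≤ q) (m : ℕ) : 0 < qfact q m := by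
  refine Finset.prod_pos fun i _ => ?_
  have := one_lt_qpow hq2 (m := i+1) (by omega)
  linarith

lemma qfact_succ (q m : ℕ) : qfact q (m+1) = qfact q m * ((q:ℚ)^(m+1) - 1) :=
  Finset.prod_range_succ _ _

lemma qbinom_eq_qfact {q n k : ℕ} (hq2 : 2 ≤ q) (hk : k ≤ n) :
    qbinom q n k = qfact q n / (qfact q k * qfact q (n-k)) := by
  have hnum : ∏ i ∈ range k, ((q:ℚ)^(n-i) - 1) = ∏ j ∈ range k, ((q:ℚ)^(n-k+j+1) - 1) := by
    rw [← Finset.prod_range_reflect]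
    refine Finset.prod_congr rfl fun j hj => ?_
    rw [mem_range] at hj
    congr 2
    omega
  have hden : ∏ i ∈ range k, ((q:ℚ)^(k-i) - 1) = qfact q k := by
    rw [← Finset.prod_range_reflect]
    refine Finset.prod_congr rfl fun j hj => ?_
    rw [mem_range] at hj
    congr 2
    omega
  have hfn : qfact q n = qfact q (n-k) * ∏ j ∈ range k, ((q:ℚ)^(n-k+j+1) - 1) := by
    have hnk : n = (n-k)+k := by omega
    calc qfact q n = qfact q ((n-k)+k) := by rw [← hnk]
    _ = qfact q (n-k) * ∏ j ∈ range k, ((q:ℚ)^(n-k+j+1) - 1) := Finset.prod_range_add _ _ _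
  rw [qbinom, Finset.prod_div_distrib, hnum, hden]
  rw [hfn]
  have h1 := (qfact_pos hq2 (n-k)).ne'
  have h2 := (qfact_pos hq2 k).ne'
  field_simp

lemma qbinom_pos {q n k : ℕ} (hq2 : 2 ≤ q) (hk : k ≤ n) : 0 < qbinom q n k := by
  rw [qbinom_eq_qfact hq2 hk]
  exact div_pos (qfact_pos hq2 n) (mul_pos (qfact_pos hq2 k) (qfact_pos hq2 (n-k)))

lemma qbinom_zero (q n : ℕ) : qbinom q n 0 = 1 := by simp [qbinom]

lemma qbinom_symm {q n k : ℕ} (hq2 : 2 ≤ q) (hk : k ≤ n) :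
    qbinom q n (n - k) = qbinom q n k := by
  rw [qbinom_eq_qfact hq2 hk, qbinom_eq_qfact hq2 (Nat.sub_le n k)]
  rw [show n - (n - k) = k by omega, mul_comm]

lemma qbinom_succ_mul {q n k : ℕ} (hq2 : 2 ≤ q) (hk : k + 1 ≤ n) :
    qbinom q n (k+1) * ((q:ℚ)^(k+1) - 1) = qbinom q n k * ((q:ℚ)^(n-k) - 1) := by
  rw [qbinom_eq_qfact hq2 hk, qbinom_eq_qfact hq2 (by omega : k ≤ n)]
  rw [show n - k = (n - (k+1)) + 1 by omega, qfact_succ, qfact_succ]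
  rw [show n - (k+1) + 1 = n - k by omega]
  have h1 := (qfact_pos hq2 k).ne'
  have h2 := (qfact_pos hq2 (n-(k+1))).ne'
  have h3 : ((q:ℚ)^(k+1) - 1) ≠ 0 := by have := one_lt_qpow hq2 (m := k+1) (by omega); linarith
  have h4 : ((q:ℚ)^(n-k) - 1) ≠ 0 := by have := one_lt_qpow hq2 (m := n-k) (by omega); linarith
  field_simp

lemma qbinom_step {q n k : ℕ} (hq2 : 2 ≤ q) (h : 2*k + 1 ≤ n) :
    qbinom q n k ≤ qbinom q n (k+1) := by
  have hk1 : k + 1 ≤ n := by omega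
  have hmul := qbinom_succ_mul hq2 hk1
  have hd : (0:ℚ) < (q:ℚ)^(k+1) - 1 := by have := one_lt_qpow hq2 (m := k+1) (by omega); linarith
  have hle : (q:ℚ)^(k+1) - 1 ≤ (q:ℚ)^(n-k) - 1 := by
    have : (q:ℚ)^(k+1) ≤ (q:ℚ)^(n-k) := by
      apply pow_le_pow_right₀ (by exact_mod_cast hq2.trans_lt' one_lt_two |>.le) (by omega)
    linarith
  have hpos := qbinom_pos hq2 (by omega : k ≤ n)
  nlinarith [qbinom_pos hq2 hk1]

lemma qbinom_step_q {q n k : ℕ} (hq2 : 2 ≤ q) (h : 2*k + 2 ≤ n) :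
    (q:ℚ) * qbinom q n k ≤ qbinom q n (k+1) := by
  have hk1 : k + 1 ≤ n := by omega
  have hmul := qbinom_succ_mul hq2 hk1
  have hd : (0:ℚ) < (q:ℚ)^(k+1) - 1 := by have := one_lt_qpow hq2 (m := k+1) (by omega); linarith
  have hq1 : (1:ℚ) ≤ (q:ℚ) := by exact_mod_cast (by omega : 1 ≤ q)
  have hle : (q:ℚ) * ((q:ℚ)^(k+1) - 1) ≤ (q:ℚ)^(n-k) - 1 := by
    have h1 : (q:ℚ) * (q:ℚ)^(k+1) = (q:ℚ)^(k+2) := by ring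
    have h2 : (q:ℚ)^(k+2) ≤ (q:ℚ)^(n-k) := by
      apply pow_le_pow_right₀ (by linarith) (by omega)
    nlinarith
  have hpos := qbinom_pos hq2 (by omega : k ≤ n)
  nlinarith [qbinom_pos hq2 hk1]

lemma qbinom_mono {q n : ℕ} (hq2 : 2 ≤ q) : ∀ a b, a ≤ b → 2*b ≤ n →
    qbinom q n a ≤ qbinom q n b := by
  intro a b
  induction b with
  | zero => intro hab _; interval_cases a; rfl
  | succ b ih =>
      intro hab hbn
      rcases Nat.eq_or_lt_of_le hab with h | h
      · rw [h]
      · exact (ih (by omega) (by omega)).trans (qbinom_step hq2 (by omega))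

lemma qbinom_mono_q {q n a b : ℕ} (hq2 : 2 ≤ q) (hab : a < b) (hbn : 2*b ≤ n) :
    (q:ℚ) * qbinom q n a ≤ qbinom q n b := by
  have h1 : qbinom q n a ≤ qbinom q n (b-1) := qbinom_mono hq2 a (b-1) (by omega) (by omega)
  have h2 : (q:ℚ) * qbinom q n (b-1) ≤ qbinom q n b := by
    have := qbinom_step_q hq2 (k := b-1) (n := n) (by omega)
    rwa [show b - 1 + 1 = b by omega] at this
  have hq0 : (0:ℚ) ≤ q := by positivity
  nlinarith [qbinom_pos hq2 (by omega : a ≤ n)]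

lemma qbinom_le_mid {q n l m : ℕ} (hq2 : 2 ≤ q) (hlm : l ≤ m) (hmn : m + l ≤ n) :
    qbinom q n l ≤ qbinom q n m := by
  rcases le_or_gt (2*m) n with h | h
  · exact qbinom_mono hq2 l m hlm h
  · rw [← qbinom_symm hq2 (by omega : m ≤ n)]
    exact qbinom_mono hq2 l (n - m) (by omega) (by omega)

lemma qbinom_le_mid_q {q n l m : ℕ} (hq2 : 2 ≤ q) (hlm : l + 1 ≤ m) (hmn : m + l + 1 ≤ n) :
    (q:ℚ) * qbinom q n l ≤ qbinom q n m := by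
  rcases le_or_gt (2*m) n with h | h
  · exact qbinom_mono_q hq2 (by omega) h
  · rw [← qbinom_symm hq2 (by omega : m ≤ n)]
    exact qbinom_mono_q hq2 (by omega) (by omega)

lemma qbinom_mul_identity {q n a b : ℕ} (hq2 : 2 ≤ q) (hab : a ≤ b) (hbn : b ≤ n) :
    qbinom q n b * qbinom q b a = qbinom q n a * qbinom q (n-a) (b-a) := by
  rw [qbinom_eq_qfact hq2 hbn, qbinom_eq_qfact hq2 hab, qbinom_eq_qfact hq2 (hab.trans hbn),
    qbinom_eq_qfact hq2 (by omega : b - a ≤ n - a)]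
  rw [show n - a - (b - a) = n - b by omega]
  have h1 := (qfact_pos hq2 a).ne'
  have h2 := (qfact_pos hq2 b).ne'
  have h3 := (qfact_pos hq2 (n-a)).ne'
  have h4 := (qfact_pos hq2 (n-b)).ne'
  have h5 := (qfact_pos hq2 (b-a)).ne'
  field_simp

lemma qbinom_eq_prod_pow {q n k : ℕ} (hq2 : 2 ≤ q) (hk : k ≤ n) :
    qbinom q n k = ∏ i ∈ range k, (((q:ℚ)^n - (q:ℚ)^i) / ((q:ℚ)^k - (q:ℚ)^i)) := by
  refine Finset.prod_congr rfl fun i hi => ?_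
  rw [mem_range] at hi
  have hq0 : ((q:ℚ)^i) ≠ 0 := (qpow_pos hq2 i).ne'
  have e1 : (q:ℚ)^n - (q:ℚ)^i = (q:ℚ)^i * ((q:ℚ)^(n-i) - 1) := by
    rw [mul_sub, mul_one, ← pow_add]
    congr 2
    omega
  have e2 : (q:ℚ)^k - (q:ℚ)^i = (q:ℚ)^i * ((q:ℚ)^(k-i) - 1) := by
    rw [mul_sub, mul_one, ← pow_add]
    congr 2
    omega
  rw [e1, e2, mul_div_mul_left _ _ hq0]


variable {K V : Type*} [Field K] [Fintype K] [AddCommGroup V] [Module K V] [Finite V]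

instance finite_submodule : Finite (Submodule K V) :=
  Finite.of_injective (SetLike.coe) SetLike.coe_injective

lemma card_li_eq {k : ℕ} (hk : k ≤ finrank K V) :
    Nat.card { s : Fin k → V // LinearIndependent K s } =
      Nat.card {W : Submodule K V // finrank K W = k} *
        ∏ i ∈ range k, (Fintype.card K ^ k - Fintype.card K ^ i) := by
  classical
  let Subk := {W : Submodule K V // finrank K W = k}
  let f : { s : Fin k → V // LinearIndependent K s } → Subk :=
    fun s => ⟨Submodule.span K (Set.range s.1), by
      rw [finrank_span_eq_card s.2, Fintype.card_fin]⟩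
  have key : ∀ W : Subk,
      {s : { s : Fin k → V // LinearIndependent K s } // f s = W} ≃
        {t : Fin k → W.1 // LinearIndependent K t} := by
    intro W
    have hspan : ∀ (t : Fin k → W.1), LinearIndependent K t →
        Submodule.span K (Set.range fun i => (t i : V)) = W.1 := by
      intro t ht
      have h1 : Set.range (fun i => (t i : V)) = W.1.subtype '' Set.range t := by
        rw [← Set.range_comp]; rfl
      rw [h1, Submodule.span_image]
      have h2 : Submodule.span K (Set.range t) = ⊤ := by
        apply Submodule.eq_top_of_finrank_eq
        rw [finrank_span_eq_card ht, Fintype.card_fin, W.2]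
      rw [h2, Submodule.map_top, Submodule.range_subtype]
    refine ⟨fun s => ⟨fun i => ⟨s.1.1 i, ?_⟩, ?_⟩,
        fun t => ⟨⟨fun i => (t.1 i : V), t.2.map' W.1.subtype (Submodule.ker_subtype _)⟩,
          Subtype.ext (hspan t.1 t.2)⟩, fun s => ?_, fun t => ?_⟩
    · have h1 : s.1.1 i ∈ Submodule.span K (Set.range s.1.1) :=
        Submodule.subset_span (Set.mem_range_self i)
      have h2 : Submodule.span K (Set.range s.1.1) = W.1 := congrArg Subtype.val s.2
      rwa [h2] at h1
    · apply LinearIndependent.of_comp W.1.subtype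
      exact s.1.2
    · exact Subtype.ext (Subtype.ext rfl)
    · exact Subtype.ext (funext fun i => Subtype.ext rfl)
  have e := (Equiv.sigmaFiberEquiv f).symm.trans
    (Equiv.sigmaCongrRight key)
  rw [Nat.card_congr e]
  letI : Fintype Subk := Fintype.ofFinite _
  letI : ∀ W : Subk, Fintype {t : Fin k → W.1 // LinearIndependent K t} := fun W =>
    Fintype.ofFinite _
  rw [Nat.card_eq_fintype_card, Fintype.card_sigma]
  have hcard : ∀ W : Subk, Fintype.card {t : Fin k → W.1 // LinearIndependent K t} =
      ∏ i ∈ range k, (Fintype.card K ^ k - Fintype.card K ^ i) := by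
    intro W
    rw [← Nat.card_eq_fintype_card, card_linearIndependent (by rw [W.2] : k ≤ finrank K W.1)]
    rw [W.2, ← Fin.prod_univ_eq_prod_range]
  rw [Finset.sum_congr rfl (fun W _ => hcard W), Finset.sum_const, smul_eq_mul,
    Nat.card_eq_fintype_card, Fintype.card]
  congr 1

lemma card_dim_subspaces_rat {q : ℕ} (hq : Fintype.card K = q) (hq2 : 2 ≤ q) {k : ℕ}
    (hk : k ≤ finrank K V) :
    (Nat.card {W : Submodule K V // finrank K W = k} : ℚ) = qbinom q (finrank K V) k := by
  letI : Fintype V := Fintype.ofFinite _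
  have hli := card_linearIndependent (K := K) (V := V) hk
  rw [card_li_eq hk, hq] at hli
  have hq1 : 1 ≤ q := by omega
  have hcast : ∀ m i : ℕ, i ≤ m → ((q ^ m - q ^ i : ℕ) : ℚ) = (q:ℚ)^m - (q:ℚ)^i := by
    intro m i hi
    have : q ^ i ≤ q ^ m := Nat.pow_le_pow_right hq1 hi
    push_cast [Nat.cast_sub this]
    ring
  have hli' : (∏ i ∈ range k, ((q:ℚ) ^ finrank K V - (q:ℚ) ^ i)) =
      (Nat.card {W : Submodule K V // finrank K W = k} : ℚ) *
        ∏ i ∈ range k, ((q:ℚ)^k - (q:ℚ)^i) := by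
    rw [← Finset.prod_range (fun j => q ^ finrank K V - q ^ j)] at hli
    have := congrArg (fun m : ℕ => (m : ℚ)) hli
    push_cast at this
    rw [Finset.prod_congr rfl (fun i hi => hcast (finrank K V) i
        (by rw [mem_range] at hi; omega)),
      Finset.prod_congr rfl (fun i hi => hcast k i (by rw [mem_range] at hi; omega))] at this
    exact this.symm
  have hden0 : (∏ i ∈ range k, ((q:ℚ)^k - (q:ℚ)^i)) ≠ 0 := by
    refine Finset.prod_ne_zero_iff.2 fun i hi => ?_
    rw [mem_range] at hi
    have h1 : (1:ℚ) < (q:ℚ) := by exact_mod_cast (by omega : 1 < q)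
    have : (q:ℚ)^i < (q:ℚ)^k := pow_lt_pow_right₀ h1 hi
    linarith
  rw [qbinom_eq_prod_pow hq2 hk, Finset.prod_div_distrib, eq_div_iff hden0, hli']

lemma card_subspaces_le_rat {q : ℕ} (hq : Fintype.card K = q) (hq2 : 2 ≤ q)
    (W : Submodule K V) {a : ℕ} (ha : a ≤ finrank K W) :
    (Nat.card {U : Submodule K V // U ≤ W ∧ finrank K U = a} : ℚ) =
      qbinom q (finrank K W) a := by
  have e : {U' : Submodule K W // finrank K U' = a} ≃
      {U : Submodule K V // U ≤ W ∧ finrank K U = a} := by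
    refine ⟨fun U' => ⟨Submodule.map W.subtype U'.1, Submodule.map_subtype_le _ _, ?_⟩,
      fun U => ⟨Submodule.comap W.subtype U.1, ?_⟩, fun U' => ?_, fun U => ?_⟩
    · rw [← LinearEquiv.finrank_eq (Submodule.equivMapOfInjective W.subtype
        (Submodule.injective_subtype W) U'.1)]
      exact U'.2
    · rw [LinearEquiv.finrank_eq (Submodule.comapSubtypeEquivOfLe U.2.1)]
      exact U.2.2
    · apply Subtype.ext
      simp only
      rw [Submodule.comap_map_eq, Submodule.ker_subtype, sup_bot_eq]
    · apply Subtype.ext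
      simp only
      rw [Submodule.map_comap_eq, Submodule.range_subtype, inf_eq_right.mpr U.2.1]
  rw [← Nat.card_congr e, card_dim_subspaces_rat hq hq2 ha]

lemma finrank_comap_mkQ (U : Submodule K V) (W' : Submodule K (V ⧸ U)) :
    finrank K (Submodule.comap U.mkQ W') = finrank K W' + finrank K U := by
  have hUle : U ≤ Submodule.comap U.mkQ W' := by
    intro x hx
    rw [Submodule.mem_comap, show U.mkQ x = 0 by rwa [← LinearMap.mem_ker, Submodule.ker_mkQ]]
    exact W'.zero_mem
  let g : ↥(Submodule.comap U.mkQ W') →ₗ[K] V ⧸ U :=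
    U.mkQ ∘ₗ (Submodule.comap U.mkQ W').subtype
  have hrange : LinearMap.range g = W' := by
    rw [LinearMap.range_comp, Submodule.range_subtype, Submodule.map_comap_eq,
      Submodule.range_mkQ, top_inf_eq]
  have hker : LinearMap.ker g = Submodule.comap (Submodule.comap U.mkQ W').subtype U := by
    rw [LinearMap.ker_comp, Submodule.ker_mkQ]
  have h := LinearMap.finrank_range_add_finrank_ker g
  rw [hrange, hker, LinearEquiv.finrank_eq (Submodule.comapSubtypeEquivOfLe hUle)] at h
  exact h.symm

lemma card_superspaces_rat {q : ℕ} (hq : Fintype.card K = q) (hq2 : 2 ≤ q)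
    (U : Submodule K V) {b : ℕ} (hab : finrank K U ≤ b) (hbn : b ≤ finrank K V) :
    (Nat.card {W : Submodule K V // U ≤ W ∧ finrank K W = b} : ℚ) =
      qbinom q (finrank K V - finrank K U) (b - finrank K U) := by
  have hfq : finrank K (V ⧸ U) = finrank K V - finrank K U := by
    have := Submodule.finrank_quotient_add_finrank U
    omega
  have hUle : ∀ W' : Submodule K (V ⧸ U), U ≤ Submodule.comap U.mkQ W' := by
    intro W' x hx
    rw [Submodule.mem_comap, show U.mkQ x = 0 by rwa [← LinearMap.mem_ker, Submodule.ker_mkQ]]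
    exact W'.zero_mem
  have e : {W' : Submodule K (V ⧸ U) // finrank K W' = b - finrank K U} ≃
      {W : Submodule K V // U ≤ W ∧ finrank K W = b} := by
    refine ⟨fun W' => ⟨Submodule.comap U.mkQ W'.1, hUle W'.1, ?_⟩,
      fun W => ⟨Submodule.map U.mkQ W.1, ?_⟩, fun W' => ?_, fun W => ?_⟩
    · have h := finrank_comap_mkQ U W'.1
      rw [W'.2] at h
      omega
    · have h := finrank_comap_mkQ U (Submodule.map U.mkQ W.1)
      rw [Submodule.comap_map_eq, Submodule.ker_mkQ, sup_eq_left.mpr W.2.1, W.2.2] at h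
      omega
    · apply Subtype.ext
      simp only
      rw [Submodule.map_comap_eq, Submodule.range_mkQ, top_inf_eq]
    · apply Subtype.ext
      simp only
      rw [Submodule.comap_map_eq, Submodule.ker_mkQ, sup_eq_left.mpr W.2.1]
  have hfin : Finite (V ⧸ U) := Finite.of_surjective U.mkQ (Submodule.mkQ_surjective U)
  rw [← Nat.card_congr e, card_dim_subspaces_rat hq hq2 (by omega), hfq]




lemma key_ineq (n l : ℕ) (q : ℚ) (hq2 : 2 ≤ q) (hl : l < n) (h3l : 3*l ≤ n)
    (G x : ℕ → ℚ)
    (hGpos : ∀ i, i ≤ n → 0 < G i)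
    (hGsym : ∀ j, j ≤ n → G (n - j) = G j)
    (hGmid : ∀ j m, j ≤ m → m + j ≤ n → G j ≤ G m)
    (hGmidq : ∀ j m, j + 1 ≤ m → m + j + 1 ≤ n → q * G j ≤ G m)
    (hx0 : ∀ i, i ≤ n → 0 ≤ x i) (hx1 : ∀ i, i ≤ n → x i ≤ 1)
    (hxmono : ∀ a b, a ≤ b → b ≤ n → x b ≤ x a)
    (hxn : x n = 0) :
    ∑ i ∈ range l, (G i - G l) ≤ ∑ i ∈ range (n+1), x i * (G i - G l) := by
  set f : ℕ → ℚ := fun i => x i * (G i - G l) with hf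
  rcases Nat.eq_zero_or_pos l with rfl | hl1
  · have : ∑ i ∈ range 0, (G i - G 0) = 0 := by simp
    rw [this]
    refine Finset.sum_nonneg fun i hi => ?_
    rw [mem_range, Nat.lt_succ_iff] at hi
    have h1 : G 0 ≤ G i := hGmid 0 i (Nat.zero_le _) (by omega)
    have h2 := hx0 i hi
    show 0 ≤ x i * (G i - G 0)
    nlinarith
  -- l ≥ 1
  have hsplit1 : ∑ i ∈ Finset.Ico 0 l, f i + ∑ i ∈ Finset.Ico l (n+1), f i
      = ∑ i ∈ Finset.Ico 0 (n+1), f i :=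
    Finset.sum_Ico_consecutive f (by omega) (by omega)
  have hsplit2 : ∑ i ∈ Finset.Ico l (n-l+1), f i + ∑ i ∈ Finset.Ico (n-l+1) (n+1), f i
      = ∑ i ∈ Finset.Ico l (n+1), f i :=
    Finset.sum_Ico_consecutive f (by omega) (by omega)
  -- low part
  have hlow : ∑ i ∈ Finset.Ico 0 l, (G i - G l) ≤ ∑ i ∈ Finset.Ico 0 l, f i := by
    refine Finset.sum_le_sum fun i hi => ?_
    rw [Finset.mem_Ico] at hi
    have h1 : G i ≤ G l := hGmid i l (by omega) (by omega)
    have h2 : x i ≤ 1 := hx1 i (by omega)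
    have := mul_le_mul_of_nonpos_right h2 (by linarith : G i - G l ≤ 0)
    show G i - G l ≤ x i * (G i - G l)
    linarith
  -- high part
  have hhigh : ∑ i ∈ Finset.Ico (n-l+1) (n+1), f i
      = ∑ j ∈ Finset.Ico 1 l, x (n-j) * (G j - G l) := by
    have h1 : ∑ i ∈ Finset.Ico (n-l+1) (n+1), f i = ∑ j ∈ range l, f (n-j) := by
      refine Finset.sum_nbij' (fun i => n - i) (fun j => n - j) ?_ ?_ ?_ ?_ ?_
      · intro a ha; rw [Finset.mem_Ico] at ha; rw [mem_range]; omega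
      · intro a ha; rw [mem_range] at ha; rw [Finset.mem_Ico]; omega
      · intro a ha; rw [Finset.mem_Ico] at ha; omega
      · intro a ha; rw [mem_range] at ha; omega
      · intro a ha; rw [Finset.mem_Ico] at ha
        congr 1
        omega
    rw [h1, Finset.range_eq_Ico, Finset.sum_eq_sum_Ico_succ_bot (by omega : 0 < l)]
    have h2 : f (n - 0) = 0 := by
      show x (n - 0) * (G (n - 0) - G l) = 0
      rw [Nat.sub_zero, hxn, zero_mul]
    rw [h2, zero_add]
    refine Finset.sum_congr rfl fun j hj => ?_
    rw [Finset.mem_Ico] at hj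
    show x (n - j) * (G (n - j) - G l) = x (n - j) * (G j - G l)
    rw [hGsym j (by omega)]
  -- mid part
  have hmid : ∑ j ∈ Finset.Ico 1 l, x (n-j) * (G l - G j) ≤ ∑ i ∈ Finset.Ico l (n-l+1), f i := by
    have hsub : (Finset.Ico 1 l).image (fun j => 2*l - j) ⊆ Finset.Ico l (n-l+1) := by
      intro i hi
      rw [Finset.mem_image] at hi
      obtain ⟨j, hj, rfl⟩ := hi
      rw [Finset.mem_Ico] at hj ⊢
      omega
    have h0 : ∀ i ∈ Finset.Ico l (n-l+1), 0 ≤ f i := by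
      intro i hi
      rw [Finset.mem_Ico] at hi
      have h1 : G l ≤ G i := hGmid l i (by omega) (by omega)
      have h2 := hx0 i (by omega)
      show 0 ≤ x i * (G i - G l)
      nlinarith
    have h3 : ∑ i ∈ (Finset.Ico 1 l).image (fun j => 2*l - j), f i
        ≤ ∑ i ∈ Finset.Ico l (n-l+1), f i :=
      Finset.sum_le_sum_of_subset_of_nonneg hsub (fun i hi _ => h0 i hi)
    have h4 : ∑ i ∈ (Finset.Ico 1 l).image (fun j => 2*l - j), f i
        = ∑ j ∈ Finset.Ico 1 l, f (2*l - j) := by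
      refine Finset.sum_image fun a ha b hb hab => ?_
      rw [Finset.mem_coe, Finset.mem_Ico] at ha hb
      omega
    have h5 : ∑ j ∈ Finset.Ico 1 l, x (n-j) * (G l - G j) ≤ ∑ j ∈ Finset.Ico 1 l, f (2*l - j) := by
      refine Finset.sum_le_sum fun j hj => ?_
      rw [Finset.mem_Ico] at hj
      have hxx : x (n - j) ≤ x (2*l - j) := hxmono (2*l - j) (n - j) (by omega) (by omega)
      have hq' : q * G l ≤ G (2*l - j) := hGmidq l (2*l - j) (by omega) (by omega)
      have hGl := hGpos l (by omega)
      have hGj := hGpos j (by omega)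
      have hgg : G l - G j ≤ G (2*l - j) - G l := by nlinarith
      have h0' : 0 ≤ G l - G j := by
        have := hGmid j l (by omega) (by omega)
        linarith
      have hx2 : 0 ≤ x (2*l - j) := hx0 (2*l - j) (by omega)
      show x (n - j) * (G l - G j) ≤ x (2*l - j) * (G (2*l - j) - G l)
      exact mul_le_mul hxx hgg h0' hx2
    linarith
  have hrel : ∑ j ∈ Finset.Ico 1 l, x (n-j) * (G j - G l)
      = - ∑ j ∈ Finset.Ico 1 l, x (n-j) * (G l - G j) := by
    rw [← Finset.sum_neg_distrib]
    refine Finset.sum_congr rfl fun j _ => by ring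
  have hrange : ∑ i ∈ range (n+1), f i = ∑ i ∈ Finset.Ico 0 (n+1), f i := by
    rw [Finset.range_eq_Ico]
  have hrangel : ∑ i ∈ range l, (G i - G l) = ∑ i ∈ Finset.Ico 0 l, (G i - G l) := by
    rw [Finset.range_eq_Ico]
  calc ∑ i ∈ range l, (G i - G l) ≤ ∑ i ∈ range (n+1), f i := by
        rw [hrange, hrangel]
        linarith [hlow, hmid, hhigh, hrel, hsplit1, hsplit2]
  _ = ∑ i ∈ range (n+1), x i * (G i - G l) := rfl


end QP

/-- The pair `(n, l)` is q-perfect whenever `n ≥ 3l`. -/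
theorem q_perfect (q n l : ℕ) (F : Type*) [Field F] [Fintype F]
    (hq : Fintype.card F = q) (hq2 : 2 ≤ q) (hl : l < n) (h3l : 3 * l ≤ n)
    (𝒱 : Finset (Submodule F (Fin n → F)))
    (hcomplex : ∀ V ∈ 𝒱, ∀ W : Submodule F (Fin n → F), W ≤ V → W ∈ 𝒱)
    (hnorm : ∑ V ∈ 𝒱, 1 / qbinom q n (Module.finrank F V) < n + 1) :
    (𝒱.card : ℚ) ≥ ∑ i ∈ Finset.range l, qbinom q n i +
      ((∑ V ∈ 𝒱, 1 / qbinom q n (Module.finrank F V)) - l) * qbinom q n l := by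
  classical
  have hfr : Module.finrank F (Fin n → F) = n := Module.finrank_fin_fun F
  letI : Fintype (Submodule F (Fin n → F)) := Fintype.ofFinite _
  have hq2' : (2:ℚ) ≤ (q:ℚ) := by exact_mod_cast hq2
  set N : ℕ → ℕ := fun i => (𝒱.filter (fun W : Submodule F (Fin n → F) => Module.finrank F ↥W = i)).card with hN
  have hmaps : ∀ W ∈ 𝒱, Module.finrank F ↥W ∈ Finset.range (n+1) := by
    intro W _
    have h := Submodule.finrank_le (R := F) W
    rw [hfr] at h
    rw [Finset.mem_range, Nat.lt_succ_iff]
    exact h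
  have htot : ∀ i, i ≤ n →
      ((Finset.univ.filter
        (fun W : Submodule F (Fin n → F) => Module.finrank F ↥W = i)).card : ℚ)
        = qbinom q n i := by
    intro i hi
    rw [← Fintype.card_subtype, ← Nat.card_eq_fintype_card]
    have h := QP.card_dim_subspaces_rat (K := F) (V := Fin n → F) hq hq2
      (k := i) (by rw [hfr]; exact hi)
    rw [hfr] at h
    exact h
  have hNle : ∀ i, i ≤ n → ((N i : ℚ)) ≤ qbinom q n i := by
    intro i hi
    rw [← htot i hi]
    exact_mod_cast Finset.card_le_card
      (Finset.filter_subset_filter _ (Finset.subset_univ 𝒱))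
  have hGpos : ∀ i, i ≤ n → 0 < qbinom q n i := fun i hi => QP.qbinom_pos hq2 hi
  have hnormS : (∑ V ∈ 𝒱, 1 / qbinom q n (Module.finrank F ↥V))
      = ∑ i ∈ Finset.range (n+1), (N i : ℚ) / qbinom q n i := by
    rw [← Finset.sum_fiberwise_of_maps_to hmaps
      (fun W => 1 / qbinom q n (Module.finrank F ↥W))]
    refine Finset.sum_congr rfl fun i hi => ?_
    have hcongr : ∀ W ∈ 𝒱.filter (fun W : Submodule F (Fin n → F) => Module.finrank F ↥W = i),
        1 / qbinom q n (Module.finrank F ↥W) = 1 / qbinom q n i := fun W hW => by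
      rw [(Finset.mem_filter.1 hW).2]
    rw [Finset.sum_congr rfl hcongr, Finset.sum_const, nsmul_eq_mul, mul_one_div]
  have hcardS : (𝒱.card : ℚ) = ∑ i ∈ Finset.range (n+1), (N i : ℚ) := by
    have h := Finset.card_eq_sum_card_fiberwise hmaps
    rw [h]
    push_cast
    rfl
  have htop : (⊤ : Submodule F (Fin n → F)) ∉ 𝒱 := by
    intro htop
    have huniv : 𝒱 = Finset.univ :=
      Finset.eq_univ_iff_forall.mpr fun W => hcomplex ⊤ htop W le_top
    have hNfull : ∀ i, i ≤ n → (N i : ℚ) = qbinom q n i := by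
      intro i hi
      rw [← htot i hi, hN]
      rw [huniv]
    have hsum : ∑ i ∈ Finset.range (n+1), (N i:ℚ)/qbinom q n i = ((n:ℚ)+1) := by
      have : ∀ i ∈ Finset.range (n+1), (N i:ℚ)/qbinom q n i = 1 := by
        intro i hi
        rw [Finset.mem_range, Nat.lt_succ_iff] at hi
        rw [hNfull i hi, div_self (hGpos i hi).ne']
      rw [Finset.sum_congr rfl this, Finset.sum_const, Finset.card_range]
      push_cast
      ring
    rw [hnormS, hsum] at hnorm
    exact lt_irrefl _ hnorm
  have hNn : N n = 0 := by
    rw [hN]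
    simp only
    rw [Finset.card_eq_zero, Finset.filter_eq_empty_iff]
    intro W hW hfrW
    have hWtop : W = ⊤ := Submodule.eq_top_of_finrank_eq (by rw [hfrW, hfr])
    exact htop (hWtop ▸ hW)
  have hmono : ∀ a b : ℕ, a ≤ b → b ≤ n →
      (N b : ℚ) * qbinom q n a ≤ (N a : ℚ) * qbinom q n b := by
    intro a b hab hbn
    have step1' : ∀ W ∈ 𝒱.filter (fun W : Submodule F (Fin n → F) => Module.finrank F ↥W = b),
        (((𝒱.filter (fun W : Submodule F (Fin n → F) => Module.finrank F ↥W = a)).filter (fun U => U ≤ W)).card : ℚ)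
          = qbinom q b a := by
      intro W hW
      rw [Finset.mem_filter] at hW
      have heq : (𝒱.filter (fun W : Submodule F (Fin n → F) => Module.finrank F ↥W = a)).filter (fun U => U ≤ W)
          = Finset.univ.filter
            (fun U : Submodule F (Fin n → F) => U ≤ W ∧ Module.finrank F ↥U = a) := by
        ext U
        simp only [Finset.mem_filter, Finset.mem_univ, true_and]
        constructor
        · rintro ⟨⟨hU𝒱, hUa⟩, hUW⟩; exact ⟨hUW, hUa⟩
        · rintro ⟨hUW, hUa⟩; exact ⟨⟨hcomplex W hW.1 U hUW, hUa⟩, hUW⟩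
      rw [heq, ← Fintype.card_subtype, ← Nat.card_eq_fintype_card]
      have h := QP.card_subspaces_le_rat (K:=F) (V:=Fin n → F) hq hq2 W
        (a := a) (by rw [hW.2]; exact hab)
      rw [hW.2] at h
      exact h
    have step2' : ∀ U ∈ 𝒱.filter (fun W : Submodule F (Fin n → F) => Module.finrank F ↥W = a),
        (((𝒱.filter (fun W : Submodule F (Fin n → F) => Module.finrank F ↥W = b)).filter (fun W => U ≤ W)).card : ℚ)
          ≤ qbinom q (n - a) (b - a) := by
      intro U hU
      have hUa := (Finset.mem_filter.1 hU).2
      have hsub : (𝒱.filter (fun W : Submodule F (Fin n → F) => Module.finrank F ↥W = b)).filter (fun W => U ≤ W) ⊆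
          Finset.univ.filter
            (fun W : Submodule F (Fin n → F) => U ≤ W ∧ Module.finrank F ↥W = b) := by
        intro W hW
        simp only [Finset.mem_filter, Finset.mem_univ, true_and] at hW ⊢
        exact ⟨hW.2, hW.1.2⟩
      have hle := Finset.card_le_card hsub
      have h := QP.card_superspaces_rat (K:=F) (V:=Fin n → F) hq hq2 U
        (b := b) (by rw [hUa]; exact hab) (by rw [hfr]; exact hbn)
      rw [hUa, hfr] at h
      calc (((𝒱.filter (fun W : Submodule F (Fin n → F) => Module.finrank F ↥W = b)).filter
            (fun W => U ≤ W)).card : ℚ)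
          ≤ ((Finset.univ.filter (fun W : Submodule F (Fin n → F) =>
              U ≤ W ∧ Module.finrank F ↥W = b)).card : ℚ) := by exact_mod_cast hle
        _ = qbinom q (n-a) (b-a) := by
            rw [← Fintype.card_subtype, ← Nat.card_eq_fintype_card]; exact h
    have hswap : ∑ W ∈ 𝒱.filter (fun W : Submodule F (Fin n → F) => Module.finrank F ↥W = b),
        ((𝒱.filter (fun W : Submodule F (Fin n → F) => Module.finrank F ↥W = a)).filter (fun U => U ≤ W)).card
      = ∑ U ∈ 𝒱.filter (fun W : Submodule F (Fin n → F) => Module.finrank F ↥W = a),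
        ((𝒱.filter (fun W : Submodule F (Fin n → F) => Module.finrank F ↥W = b)).filter (fun W => U ≤ W)).card := by
      simp only [Finset.card_filter]
      rw [Finset.sum_comm]
    have hb' : (N b : ℚ) * qbinom q b a
        = ∑ W ∈ 𝒱.filter (fun W : Submodule F (Fin n → F) => Module.finrank F ↥W = b),
            (((𝒱.filter (fun W : Submodule F (Fin n → F) => Module.finrank F ↥W = a)).filter
              (fun U => U ≤ W)).card : ℚ) := by
      rw [Finset.sum_congr rfl step1', Finset.sum_const, nsmul_eq_mul]
    have ha' : ∑ U ∈ 𝒱.filter (fun W : Submodule F (Fin n → F) => Module.finrank F ↥W = a),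
        (((𝒱.filter (fun W : Submodule F (Fin n → F) => Module.finrank F ↥W = b)).filter
          (fun W => U ≤ W)).card : ℚ) ≤ (N a:ℚ) * qbinom q (n-a) (b-a) := by
      calc ∑ U ∈ 𝒱.filter (fun W : Submodule F (Fin n → F) => Module.finrank F ↥W = a),
          (((𝒱.filter (fun W : Submodule F (Fin n → F) => Module.finrank F ↥W = b)).filter
            (fun W => U ≤ W)).card : ℚ)
          ≤ ∑ _U ∈ 𝒱.filter (fun W : Submodule F (Fin n → F) => Module.finrank F ↥W = a), qbinom q (n-a) (b-a) :=
            Finset.sum_le_sum step2'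
        _ = (N a:ℚ) * qbinom q (n-a) (b-a) := by rw [Finset.sum_const, nsmul_eq_mul]
    have hcast : (∑ W ∈ 𝒱.filter (fun W : Submodule F (Fin n → F) => Module.finrank F ↥W = b),
        (((𝒱.filter (fun W : Submodule F (Fin n → F) => Module.finrank F ↥W = a)).filter
          (fun U => U ≤ W)).card : ℚ))
      = ∑ U ∈ 𝒱.filter (fun W : Submodule F (Fin n → F) => Module.finrank F ↥W = a),
        (((𝒱.filter (fun W : Submodule F (Fin n → F) => Module.finrank F ↥W = b)).filter
          (fun W => U ≤ W)).card : ℚ) := by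
      have := congrArg (fun m : ℕ => (m:ℚ)) hswap
      push_cast at this
      exact this
    have hDC : (N b:ℚ) * qbinom q b a ≤ (N a:ℚ) * qbinom q (n-a) (b-a) := by
      rw [hb', hcast]; exact ha'
    have hid := QP.qbinom_mul_identity (q := q) (n := n) hq2 hab hbn
    have hc := QP.qbinom_pos (q := q) hq2 hab
    have hGa := hGpos a (hab.trans hbn)
    have hGb := hGpos b hbn
    have h2 : (N b:ℚ) * qbinom q b a * qbinom q n a
        ≤ (N a:ℚ) * qbinom q (n-a) (b-a) * qbinom q n a :=
      mul_le_mul_of_nonneg_right hDC hGa.le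
    have h3 : (N a:ℚ) * qbinom q (n-a) (b-a) * qbinom q n a
        = (N a:ℚ) * qbinom q n b * qbinom q b a := by
      linear_combination (-(N a : ℚ)) * hid
    refine le_of_mul_le_mul_right ?_ hc
    calc (N b:ℚ) * qbinom q n a * qbinom q b a
        = (N b:ℚ) * qbinom q b a * qbinom q n a := by ring
      _ ≤ (N a:ℚ) * qbinom q (n-a) (b-a) * qbinom q n a := h2
      _ = (N a:ℚ) * qbinom q n b * qbinom q b a := h3
  set x : ℕ → ℚ := fun i => (N i : ℚ) / qbinom q n i with hx
  have hx0 : ∀ i, i ≤ n → 0 ≤ x i := by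
    intro i hi
    show 0 ≤ (N i : ℚ) / qbinom q n i
    exact div_nonneg (Nat.cast_nonneg _) (hGpos i hi).le
  have hx1 : ∀ i, i ≤ n → x i ≤ 1 := by
    intro i hi
    show (N i : ℚ) / qbinom q n i ≤ 1
    rw [div_le_one (hGpos i hi)]
    exact hNle i hi
  have hxmono : ∀ a b, a ≤ b → b ≤ n → x b ≤ x a := by
    intro a b hab hbn
    show (N b : ℚ) / qbinom q n b ≤ (N a : ℚ) / qbinom q n a
    rw [div_le_div_iff₀ (hGpos b hbn) (hGpos a (hab.trans hbn))]
    exact hmono a b hab hbn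
  have hxn : x n = 0 := by
    show (N n : ℚ) / qbinom q n n = 0
    rw [hNn]
    simp
  have key := QP.key_ineq n l (q:ℚ) hq2' hl h3l (qbinom q n) x hGpos
    (fun j hj => QP.qbinom_symm hq2 hj)
    (fun j m hjm hmn => QP.qbinom_le_mid hq2 hjm hmn)
    (fun j m hjm hmn => QP.qbinom_le_mid_q hq2 hjm hmn)
    hx0 hx1 hxmono hxn
  have e1 : ∑ i ∈ Finset.range (n+1), x i * (qbinom q n i - qbinom q n l)
      = (∑ i ∈ Finset.range (n+1), (N i:ℚ))
        - (∑ i ∈ Finset.range (n+1), (N i:ℚ)/qbinom q n i) * qbinom q n l := by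
    have hterm : ∀ i ∈ Finset.range (n+1),
        x i * (qbinom q n i - qbinom q n l)
          = (N i:ℚ) - ((N i:ℚ)/qbinom q n i) * qbinom q n l := by
      intro i hi
      rw [Finset.mem_range, Nat.lt_succ_iff] at hi
      have hGne := (hGpos i hi).ne'
      show (N i : ℚ) / qbinom q n i * (qbinom q n i - qbinom q n l)
        = (N i:ℚ) - ((N i:ℚ)/qbinom q n i) * qbinom q n l
      field_simp
    rw [Finset.sum_congr rfl hterm, Finset.sum_sub_distrib, ← Finset.sum_mul]
  have e2 : ∑ i ∈ Finset.range l, (qbinom q n i - qbinom q n l)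
      = (∑ i ∈ Finset.range l, qbinom q n i) - (l:ℚ) * qbinom q n l := by
    rw [Finset.sum_sub_distrib, Finset.sum_const, Finset.card_range, nsmul_eq_mul]
  rw [ge_iff_le, hcardS, hnormS]
  rw [e1, e2] at key
  linarith [key]
end
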